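/- Let [q] = D ⊔ E with π ∈ NC(D) and π̃ its maximal non-crossing completion on E. Then Σ_{π ∈ NC(D)} Σ_{ρ ∈ NC(E), ρ ≤ π̃} f(π ⊔ ρ) = Σ_{σ ∈ NC(q), σ split by D,E} f(σ) for any function f on NC(q), where 'σ split by D,E' means every block of σ lies in D or in E. -/
import Mathlib


open Finset

attribute [local instance] Classical.propDecidable

/-- `P` is a non-crossing partition of the finite set `S ⊆ ℕ`. -/
def IsNCPartition (S : Finset ℕ) (P : Finset (Finset ℕ)) : Prop :=
  (∀ B ∈ P, B.Nonempty) ∧ (∀ B ∈ P, B ⊆ S) ∧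
  (∀ x ∈ S, ∃ B ∈ P, x ∈ B) ∧
  (∀ B ∈ P, ∀ B' ∈ P, B ≠ B' → Disjoint B B') ∧
  (∀ B ∈ P, ∀ B' ∈ P, B ≠ B' →
    ∀ a ∈ B, ∀ b ∈ B', ∀ c ∈ B, ∀ d ∈ B', ¬ (a < b ∧ b < c ∧ c < d))

/-- Refinement order on partitions: every block of `P` is contained in a block of `Q`. -/
def refines (P Q : Finset (Finset ℕ)) : Prop := ∀ B ∈ P, ∃ C ∈ Q, B ⊆ C

/-- The finite set of all non-crossing partitions of `S`. -/
noncomputable def NCset (S : Finset ℕ) : Finset (Finset (Finset ℕ)) :=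
  S.powerset.powerset.filter (IsNCPartition S)

/-- Multiplicative extension of a family of functionals `f n : (Fin n → A) → ℂ` over a
partition `P`: each block contributes `f |C|` evaluated on the entries of `a` indexed by the
block, taken in increasing order. -/
noncomputable def extMul {A : Type*} (f : ∀ n, (Fin n → A) → ℂ)
    (P : Finset (Finset ℕ)) (a : ℕ → A) : ℂ :=
  ∏ C ∈ P, f C.card (fun i => a ((C.orderIsoOfFin rfl i : ℕ)))

/-- Freeness of a family of subsets with respect to a functional `τ`:
alternating centered products vanish. -/
def IsFreeFamily {E : Type*} [Monoid E] {I : Type*} (τ : E → ℂ) (B : I → Set E) : Prop :=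
  ∀ (q : ℕ), 1 ≤ q → ∀ (ind : Fin q → I) (a : Fin q → E),
    (∀ j, a j ∈ B (ind j)) → (∀ j, τ (a j) = 0) →
    (∀ j : Fin q, ∀ h : (j : ℕ) + 1 < q, ind j ≠ ind ⟨(j : ℕ) + 1, h⟩) →
    τ (List.ofFn a).prod = 0


lemma mem_NCset_iff {S : Finset ℕ} {P : Finset (Finset ℕ)} :
    P ∈ NCset S ↔ IsNCPartition S P := by
  constructor
  · exact fun h => (Finset.mem_filter.1 h).2
  · intro h
    refine Finset.mem_filter.2 ⟨?_, h⟩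
    rw [Finset.mem_powerset]
    intro B hB
    exact Finset.mem_powerset.2 (h.2.1 B (by simpa using hB))

lemma restrict_NC {q : ℕ} {D E : Finset ℕ} (hDE : Disjoint D E)
    (hu : D ∪ E = Finset.range q)
    {σ : Finset (Finset ℕ)} (hσ : IsNCPartition (Finset.range q) σ)
    (hsplit : ∀ B ∈ σ, B ⊆ D ∨ B ⊆ E) :
    IsNCPartition D (σ.filter (· ⊆ D)) := by
  obtain ⟨h1, h2, h3, h4, h5⟩ := hσ
  refine ⟨fun B hB => h1 B (mem_filter.1 hB).1, fun B hB => (mem_filter.1 hB).2, ?_,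
    fun B hB B' hB' => h4 B (mem_filter.1 hB).1 B' (mem_filter.1 hB').1,
    fun B hB B' hB' => h5 B (mem_filter.1 hB).1 B' (mem_filter.1 hB').1⟩
  intro x hx
  obtain ⟨B, hB, hxB⟩ := h3 x (hu ▸ mem_union_left E hx)
  rcases hsplit B hB with h | h
  · exact ⟨B, mem_filter.2 ⟨hB, h⟩, hxB⟩
  · exact absurd (hDE.forall_ne_finset hx (h hxB)) (by simp)

lemma union_NC {q : ℕ} {D E : Finset ℕ} (hDE : Disjoint D E)
    (hu : D ∪ E = Finset.range q)
    {π ρ T : Finset (Finset ℕ)} (hπ : IsNCPartition D π) (hρ : IsNCPartition E ρ)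
    (hT : IsNCPartition (Finset.range q) (π ∪ T)) (hTE : ∀ C ∈ T, C ⊆ E)
    (href : refines ρ T) :
    IsNCPartition (Finset.range q) (π ∪ ρ) := by
  have hDr : D ⊆ Finset.range q := hu ▸ subset_union_left
  have hEr : E ⊆ Finset.range q := hu ▸ subset_union_right
  have hne : ∀ {B B' : Finset ℕ}, B ∈ π → B' ⊆ E → B'.Nonempty → B ≠ B' := by
    intro B B' hB hB'E hB'ne h
    obtain ⟨x, hx⟩ := hB'ne
    exact absurd (hDE.forall_ne_finset (hπ.2.1 B hB (h ▸ hx)) (hB'E hx)) (by simp)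
  refine ⟨?_, ?_, ?_, ?_, ?_⟩
  · intro B hB
    rcases mem_union.1 hB with h | h
    exacts [hπ.1 B h, hρ.1 B h]
  · intro B hB
    rcases mem_union.1 hB with h | h
    exacts [(hπ.2.1 B h).trans hDr, (hρ.2.1 B h).trans hEr]
  · intro x hx
    rcases mem_union.1 (hu ▸ hx) with h | h
    · obtain ⟨B, hB, hxB⟩ := hπ.2.2.1 x h
      exact ⟨B, mem_union_left _ hB, hxB⟩
    · obtain ⟨B, hB, hxB⟩ := hρ.2.2.1 x h
      exact ⟨B, mem_union_right _ hB, hxB⟩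
  · intro B hB B' hB' hBB'
    rcases mem_union.1 hB with h | h <;> rcases mem_union.1 hB' with h' | h'
    · exact hπ.2.2.2.1 B h B' h' hBB'
    · exact hDE.mono (hπ.2.1 B h) (hρ.2.1 B' h')
    · exact (hDE.mono (hπ.2.1 B' h') (hρ.2.1 B h)).symm
    · exact hρ.2.2.2.1 B h B' h' hBB'
  · intro B hB B' hB' hBB' a ha b hb c hc d hd
    rcases mem_union.1 hB with h | h <;> rcases mem_union.1 hB' with h' | h'
    · exact hπ.2.2.2.2 B h B' h' hBB' a ha b hb c hc d hd
    · obtain ⟨C, hC, hB'C⟩ := href B' h'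
      have hCne : C.Nonempty := hT.1 C (mem_union_right _ hC)
      exact hT.2.2.2.2 B (mem_union_left _ h) C (mem_union_right _ hC)
        (hne h (hTE C hC) hCne) a ha b (hB'C hb) c hc d (hB'C hd)
    · obtain ⟨C, hC, hBC⟩ := href B h
      have hCne : C.Nonempty := hT.1 C (mem_union_right _ hC)
      exact hT.2.2.2.2 C (mem_union_right _ hC) B' (mem_union_left _ h')
        (Ne.symm (hne h' (hTE C hC) hCne)) a (hBC ha) b hb c (hBC hc) d hd
    · exact hρ.2.2.2.2 B h B' h' hBB' a ha b hb c hc d hd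


/-- Re-indexing a double sum over pairs (π, ρ ≤ π̃) as a single sum over split
non-crossing partitions of [q]. -/
theorem stmt4 (q : ℕ) (D E : Finset ℕ) (hDE : Disjoint D E)
    (hu : D ∪ E = Finset.range q)
    (tilde : Finset (Finset ℕ) → Finset (Finset ℕ))
    (htilde : ∀ π ∈ NCset D, IsNCPartition E (tilde π) ∧
      IsNCPartition (Finset.range q) (π ∪ tilde π) ∧
      ∀ ρ, IsNCPartition E ρ → IsNCPartition (Finset.range q) (π ∪ ρ) →
        refines ρ (tilde π))
    (f : Finset (Finset ℕ) → ℂ) :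
    (∑ π ∈ NCset D, ∑ ρ ∈ (NCset E).filter (fun ρ => refines ρ (tilde π)), f (π ∪ ρ))
      = ∑ σ ∈ (NCset (Finset.range q)).filter (fun σ => ∀ B ∈ σ, B ⊆ D ∨ B ⊆ E),
          f σ := by
  have hu' : E ∪ D = Finset.range q := by rwa [union_comm]
  rw [Finset.sum_sigma']
  refine Finset.sum_bij' (fun p _ => p.1 ∪ p.2)
    (fun σ _ => ⟨σ.filter (· ⊆ D), σ.filter (· ⊆ E)⟩) ?_ ?_ ?_ ?_ ?_
  · -- forward membership
    rintro ⟨π, ρ⟩ hp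
    rw [mem_sigma] at hp
    obtain ⟨hπm, hρm⟩ := hp
    have hπ := mem_NCset_iff.1 hπm
    obtain ⟨hρm', href⟩ := mem_filter.1 hρm
    have hρ := mem_NCset_iff.1 hρm'
    obtain ⟨hT, hπT, _⟩ := htilde π hπm
    have hNC : IsNCPartition (Finset.range q) (π ∪ ρ) :=
      union_NC hDE hu hπ hρ hπT hT.2.1 href
    refine mem_filter.2 ⟨mem_NCset_iff.2 hNC, ?_⟩
    intro B hB
    rcases mem_union.1 hB with h | h
    exacts [Or.inl (hπ.2.1 B h), Or.inr (hρ.2.1 B h)]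
  · -- backward membership
    intro σ hσm
    obtain ⟨hσm', hsplit⟩ := mem_filter.1 hσm
    have hσ := mem_NCset_iff.1 hσm'
    have hπ : IsNCPartition D (σ.filter (· ⊆ D)) := restrict_NC hDE hu hσ hsplit
    have hρ : IsNCPartition E (σ.filter (· ⊆ E)) :=
      restrict_NC hDE.symm hu' hσ (fun B hB => (hsplit B hB).symm)
    have hunion : σ.filter (· ⊆ D) ∪ σ.filter (· ⊆ E) = σ := by
      ext B
      simp only [mem_union, mem_filter]
      constructor
      · rintro (⟨h, _⟩ | ⟨h, _⟩) <;> exact h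
      · intro h
        rcases hsplit B h with h' | h'
        exacts [Or.inl ⟨h, h'⟩, Or.inr ⟨h, h'⟩]
    refine mem_sigma.2 ⟨mem_NCset_iff.2 hπ, mem_filter.2 ⟨mem_NCset_iff.2 hρ, ?_⟩⟩
    exact (htilde _ (mem_NCset_iff.2 hπ)).2.2 _ hρ (by rw [hunion]; exact hσ)
  · -- left inverse
    rintro ⟨π, ρ⟩ hp
    rw [mem_sigma] at hp
    obtain ⟨hπm, hρm⟩ := hp
    have hπ := mem_NCset_iff.1 hπm
    have hρ := mem_NCset_iff.1 (mem_filter.1 hρm).1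
    have key : ∀ {B : Finset ℕ}, B ∈ ρ → ¬ B ⊆ D := by
      intro B hB hBD
      obtain ⟨x, hx⟩ := hρ.1 B hB
      exact absurd (hDE.forall_ne_finset (hBD hx) (hρ.2.1 B hB hx)) (by simp)
    have key' : ∀ {B : Finset ℕ}, B ∈ π → ¬ B ⊆ E := by
      intro B hB hBE
      obtain ⟨x, hx⟩ := hπ.1 B hB
      exact absurd (hDE.forall_ne_finset (hπ.2.1 B hB hx) (hBE hx)) (by simp)
    have e1 : (π ∪ ρ).filter (· ⊆ D) = π := by
      ext B
      simp only [mem_filter, mem_union]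
      constructor
      · rintro ⟨h | h, hBD⟩
        exacts [h, absurd hBD (key h)]
      · exact fun h => ⟨Or.inl h, hπ.2.1 B h⟩
    have e2 : (π ∪ ρ).filter (· ⊆ E) = ρ := by
      ext B
      simp only [mem_filter, mem_union]
      constructor
      · rintro ⟨h | h, hBE⟩
        exacts [absurd hBE (key' h), h]
      · exact fun h => ⟨Or.inr h, hρ.2.1 B h⟩
    simp only [e1, e2]
  · -- right inverse
    intro σ hσm
    obtain ⟨_, hsplit⟩ := mem_filter.1 hσm
    ext B
    simp only [mem_union, mem_filter]
    constructor
    · rintro (⟨h, _⟩ | ⟨h, _⟩) <;> exact h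
    · intro h
      rcases hsplit B h with h' | h'
      exacts [Or.inl ⟨h, h'⟩, Or.inr ⟨h, h'⟩]
  · rintro ⟨π, ρ⟩ _
    rfl
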